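/- arXiv:1105.0062 — 2 statements merged into one kernel-verified Lean document; each statement's English description precedes it below -/
import Mathlib

section
/- For any s ≥ 0 and α ∈ (0,1), the function φ₋(-s) = -s·Γ(α(s-1)+1)/Γ(αs+1) admits the integral representation φ₋(-s) = -∫₀^∞ (1 - e^{-sy}) π_α(y) dy, where π_α(y) = (1-α)e^{y/α} / (α Γ(α+1)(e^{y/α}-1)^{2-α}). -/
/-!
Substituting `x = exp (-y / α)` turns the integral into `(1 - α) / Γ(α + 1)` times
`∫₀¹ (1 - x ^ c) x ^ (-α) (1 - x) ^ (α - 2) dx` with `c = α s`. The function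
`x ^ (1 - α) (1 - x ^ c) (1 - x) ^ (α - 1)` vanishes at both ends of `(0, 1)` and its derivative is
`1 - α` times this integrand minus `c x ^ (c - α) (1 - x) ^ (α - 1)`, so the integral equals
`c B(c + 1 - α, α) / (1 - α)`; with `Γ(α + 1) = α Γ(α)` this is the stated ratio of Gamma values.
-/

open Real Set MeasureTheory Filter Topology
open ProbabilityTheory (beta)

theorem lintegral_ofReal_rpow_mul_one_sub_rpow {a b : ℝ} (ha : 0 < a) (hb : 0 < b) :
    ∫⁻ x in Ioo 0 1, ENNReal.ofReal (x ^ (a - 1) * (1 - x) ^ (b - 1)) =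
      ENNReal.ofReal (beta a b) := by
  have hB := ProbabilityTheory.beta_pos ha hb
  have h := ProbabilityTheory.lintegral_betaPDF_eq_one ha hb
  simp_rw [ProbabilityTheory.lintegral_betaPDF, mul_assoc,
    ENNReal.ofReal_mul (one_div_pos.2 hB).le] at h
  rw [lintegral_const_mul _ (by fun_prop), one_div, ENNReal.ofReal_inv_of_pos hB, mul_comm] at h
  rw [ENNReal.eq_inv_of_mul_eq_one_left h, inv_inv]

theorem integrableOn_rpow_mul_one_sub_rpow {a b : ℝ} (ha : 0 < a) (hb : 0 < b) :
    IntegrableOn (fun x : ℝ ↦ x ^ (a - 1) * (1 - x) ^ (b - 1)) (Ioo 0 1) := by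
  refine ⟨by fun_prop, (hasFiniteIntegral_iff_ofReal ?_).2 ?_⟩
  · filter_upwards [ae_restrict_mem measurableSet_Ioo] with x hx
    exact mul_nonneg (rpow_nonneg hx.1.le _) (rpow_nonneg (sub_nonneg.2 hx.2.le) _)
  · rw [lintegral_ofReal_rpow_mul_one_sub_rpow ha hb]
    exact ENNReal.ofReal_lt_top

theorem integral_rpow_mul_one_sub_rpow {a b : ℝ} (ha : 0 < a) (hb : 0 < b) :
    ∫ x in Ioo 0 1, x ^ (a - 1) * (1 - x) ^ (b - 1) = beta a b := by
  rw [integral_eq_lintegral_of_nonneg_ae, lintegral_ofReal_rpow_mul_one_sub_rpow ha hb,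
    ENNReal.toReal_ofReal (ProbabilityTheory.beta_pos ha hb).le]
  · filter_upwards [ae_restrict_mem measurableSet_Ioo] with x hx
    exact mul_nonneg (rpow_nonneg hx.1.le _) (rpow_nonneg (sub_nonneg.2 hx.2.le) _)
  · fun_prop

theorem one_sub_rpow_le_mul_one_sub {c x : ℝ} (hc : 0 ≤ c) (hx0 : 0 ≤ x) (hx1 : x ≤ 1) :
    1 - x ^ c ≤ (1 + c) * (1 - x) := by
  rcases le_total c 1 with hc1 | hc1
  · have : x ^ (1 : ℝ) ≤ x ^ c := rpow_le_rpow_of_exponent_ge' hx0 hx1 hc hc1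
    rw [rpow_one] at this
    nlinarith
  · have := one_add_mul_self_le_rpow_one_add (by linarith : (-1 : ℝ) ≤ x - 1) hc1
    rw [add_sub_cancel] at this
    nlinarith

theorem hasDerivAt_rpow_mul_one_sub_rpow_mul_one_sub_rpow (α c : ℝ) {x : ℝ} (hx0 : 0 < x)
    (hx1 : x < 1) :
    HasDerivAt (fun y : ℝ ↦ y ^ (1 - α) * (1 - y ^ c) * (1 - y) ^ (α - 1))
      ((1 - α) * ((1 - x ^ c) * x ^ (-α) * (1 - x) ^ (α - 2)) -
        c * (x ^ (c + 1 - α - 1) * (1 - x) ^ (α - 1))) x := by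
  have h1x : 0 < 1 - x := sub_pos.2 hx1
  have hA := hasDerivAt_rpow_const (p := 1 - α) (Or.inl hx0.ne')
  have hB := (hasDerivAt_rpow_const (p := c) (Or.inl hx0.ne')).const_sub 1
  have hC := ((hasDerivAt_id x).const_sub 1).rpow_const (p := α - 1) (Or.inl h1x.ne')
  refine ((hA.mul hB).mul hC).congr_deriv ?_
  have e1 : x ^ (1 - α) = x ^ (-α) * x := by
    rw [← rpow_add_one hx0.ne']; ring_nf
  have e2 : x ^ (c + 1 - α - 1) = x ^ (c - 1) * x ^ (-α) * x := by
    rw [mul_assoc, ← rpow_add_one hx0.ne', ← rpow_add hx0]; ring_nf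
  have e3 : (1 - x) ^ (α - 1) = (1 - x) ^ (α - 2) * (1 - x) := by
    rw [← rpow_add_one h1x.ne']; ring_nf
  simp only [id, Pi.mul_apply, show 1 - α - 1 = -α by ring, show α - 1 - 1 = α - 2 by ring]
  rw [e2, e1, e3]
  ring

theorem tendsto_rpow_mul_one_sub_rpow_mul_one_sub_rpow_nhdsGT_zero {α : ℝ} (hα : α < 1) {c : ℝ}
    (hc : 0 ≤ c) :
    Tendsto (fun y : ℝ ↦ y ^ (1 - α) * (1 - y ^ c) * (1 - y) ^ (α - 1)) (𝓝[>] 0) (𝓝 0) := by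
  have hcont : ContinuousAt (fun y : ℝ ↦ y ^ (1 - α) * (1 - y ^ c) * (1 - y) ^ (α - 1)) 0 :=
    ((continuousAt_rpow_const _ _ (Or.inr (by linarith))).mul
      (continuousAt_const.sub (continuousAt_rpow_const _ _ (Or.inr hc)))).mul
      ((continuousAt_const.sub continuousAt_id).rpow_const (Or.inl (by norm_num)))
  simpa [zero_rpow (sub_ne_zero.2 hα.ne')] using hcont.tendsto.mono_left nhdsWithin_le_nhds

theorem tendsto_rpow_mul_one_sub_rpow_mul_one_sub_rpow_nhdsLT_one {α : ℝ} (hα0 : 0 < α)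
    (hα1 : α < 1) {c : ℝ} (hc : 0 ≤ c) :
    Tendsto (fun y : ℝ ↦ y ^ (1 - α) * (1 - y ^ c) * (1 - y) ^ (α - 1)) (𝓝[<] 1) (𝓝 0) := by
  have hbound : Tendsto (fun y : ℝ ↦ (1 + c) * (1 - y) ^ α) (𝓝[<] 1) (𝓝 0) := by
    have hcont : Continuous (fun y : ℝ ↦ (1 + c) * (1 - y) ^ α) :=
      ((continuous_const.sub continuous_id).rpow_const fun _ ↦ Or.inr hα0.le).const_mul _
    simpa [zero_rpow hα0.ne'] using (hcont.tendsto 1).mono_left nhdsWithin_le_nhds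
  have hbounds : ∀ᶠ x in 𝓝[<] (1 : ℝ), 0 ≤ x ^ (1 - α) * (1 - x ^ c) * (1 - x) ^ (α - 1) ∧
      x ^ (1 - α) * (1 - x ^ c) * (1 - x) ^ (α - 1) ≤ (1 + c) * (1 - x) ^ α := by
    filter_upwards [Ioo_mem_nhdsLT one_pos] with x ⟨hx0, hx1⟩
    have h1x : 0 < 1 - x := sub_pos.2 hx1
    have hxc : 0 ≤ 1 - x ^ c := sub_nonneg.2 (rpow_le_one hx0.le hx1.le hc)
    refine ⟨by positivity, ?_⟩
    calc x ^ (1 - α) * (1 - x ^ c) * (1 - x) ^ (α - 1)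
        ≤ 1 * ((1 + c) * (1 - x)) * (1 - x) ^ (α - 1) := by
          gcongr
          · exact rpow_le_one hx0.le hx1.le (by linarith)
          · exact one_sub_rpow_le_mul_one_sub hc hx0.le hx1.le
      _ = (1 + c) * (1 - x) ^ α := by
          rw [one_mul, mul_assoc, ← rpow_one_add' h1x.le (by linarith)]; ring_nf
  exact squeeze_zero' (hbounds.mono fun _ h ↦ h.1) (hbounds.mono fun _ h ↦ h.2) hbound

theorem integrableOn_one_sub_rpow_mul_rpow_mul_one_sub_rpow {α : ℝ} (hα0 : 0 < α) (hα1 : α < 1)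
    {c : ℝ} (hc : 0 ≤ c) :
    IntegrableOn (fun x : ℝ ↦ (1 - x ^ c) * x ^ (-α) * (1 - x) ^ (α - 2)) (Ioo 0 1) := by
  have hbeta := (integrableOn_rpow_mul_one_sub_rpow (sub_pos.2 hα1) hα0).const_mul (1 + c)
  refine hbeta.mono' (by fun_prop) ?_
  filter_upwards [ae_restrict_mem measurableSet_Ioo] with x ⟨hx0, hx1⟩
  have h1x : 0 < 1 - x := sub_pos.2 hx1
  have hxc : 0 ≤ 1 - x ^ c := sub_nonneg.2 (rpow_le_one hx0.le hx1.le hc)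
  rw [norm_of_nonneg (by positivity)]
  calc (1 - x ^ c) * x ^ (-α) * (1 - x) ^ (α - 2)
      ≤ (1 + c) * (1 - x) * x ^ (-α) * (1 - x) ^ (α - 2) := by
        gcongr; exact one_sub_rpow_le_mul_one_sub hc hx0.le hx1.le
    _ = (1 + c) * (x ^ (1 - α - 1) * (1 - x) ^ (α - 1)) := by
        rw [show 1 - α - 1 = -α by ring, show α - 1 = α - 2 + 1 by ring, rpow_add_one h1x.ne']
        ring

theorem integral_one_sub_rpow_mul_rpow_mul_one_sub_rpow {α : ℝ} (hα0 : 0 < α) (hα1 : α < 1)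
    {c : ℝ} (hc : 0 ≤ c) :
    ∫ x in Ioo 0 1, (1 - x ^ c) * x ^ (-α) * (1 - x) ^ (α - 2) =
      c * beta (c + 1 - α) α / (1 - α) := by
  have hg := integrableOn_one_sub_rpow_mul_rpow_mul_one_sub_rpow hα0 hα1 hc
  have hb := integrableOn_rpow_mul_one_sub_rpow (a := c + 1 - α) (by linarith) hα0
  have hint := (hg.const_mul (1 - α)).sub (hb.const_mul c)
  have hFTC := intervalIntegral.integral_eq_sub_of_hasDerivAt_of_tendsto one_pos
    (fun x hx ↦ hasDerivAt_rpow_mul_one_sub_rpow_mul_one_sub_rpow α c hx.1 hx.2)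
    ((intervalIntegrable_iff_integrableOn_Ioo_of_le zero_le_one).2 hint)
    (tendsto_rpow_mul_one_sub_rpow_mul_one_sub_rpow_nhdsGT_zero hα1 hc)
    (tendsto_rpow_mul_one_sub_rpow_mul_one_sub_rpow_nhdsLT_one hα0 hα1 hc)
  rw [intervalIntegral.integral_of_le zero_le_one, integral_Ioc_eq_integral_Ioo,
    integral_sub (hg.const_mul _) (hb.const_mul _), integral_const_mul, integral_const_mul,
    integral_rpow_mul_one_sub_rpow (by linarith) hα0, sub_self, sub_eq_zero] at hFTC
  rw [eq_div_iff (sub_pos.2 hα1).ne', ← hFTC, mul_comm]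

theorem integral_Ioi_smul_comp_exp_neg_div {E : Type*} [NormedAddCommGroup E] [NormedSpace ℝ E]
    {α : ℝ} (hα : 0 < α) (f : ℝ → E) :
    ∫ y in Ioi 0, (exp (-y / α) / α) • f (exp (-y / α)) = ∫ x in Ioo 0 1, f x := by
  have himage : (fun y ↦ exp (-y / α)) '' Ioi 0 = Ioo 0 1 := by
    ext x
    constructor
    · rintro ⟨y, hy, rfl⟩
      exact ⟨exp_pos _, exp_lt_one_iff.2 (div_neg_of_neg_of_pos (neg_neg_of_pos hy) hα)⟩
    · rintro ⟨hx0, hx1⟩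
      refine ⟨-α * log x, mul_pos_of_neg_of_neg (neg_neg_of_pos hα) (log_neg hx0 hx1), ?_⟩
      simp only [neg_mul, neg_neg, mul_div_cancel_left₀ _ hα.ne', exp_log hx0]
  have hanti : StrictAnti fun y ↦ exp (-y / α) :=
    exp_strictMono.comp_strictAnti fun a b hab ↦ div_lt_div_of_pos_right (neg_lt_neg hab) hα
  have hderiv : ∀ y ∈ Ioi (0 : ℝ),
      HasDerivWithinAt (fun y ↦ exp (-y / α)) (-(exp (-y / α) / α)) (Ioi 0) y := fun y _ ↦ by
    simpa [neg_div, div_eq_mul_inv] using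
      (((hasDerivAt_neg y).div_const α).exp).hasDerivWithinAt
  rw [← himage,
    integral_image_eq_integral_abs_deriv_smul measurableSet_Ioi hderiv hanti.injective.injOn]
  refine setIntegral_congr_fun measurableSet_Ioi fun y _ ↦ ?_
  rw [abs_neg, abs_of_pos (by positivity)]

theorem inv_div_inv_sub_one_rpow {x : ℝ} (hx0 : 0 < x) (hx1 : x < 1) (α : ℝ) :
    x⁻¹ / (x⁻¹ - 1) ^ (2 - α) = x * (x ^ (-α) * (1 - x) ^ (α - 2)) := by
  have h1x : 0 < 1 - x := sub_pos.2 hx1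
  rw [show x⁻¹ - 1 = (1 - x) / x by field_simp, div_rpow h1x.le hx0.le,
    show 2 - α = -α + 1 + 1 by ring, rpow_add_one hx0.ne', rpow_add_one hx0.ne',
    show -α + 1 + 1 = -(α - 2) by ring, rpow_neg h1x.le]
  field_simp

theorem stmt_0 (α : ℝ) (hα : α ∈ Set.Ioo (0:ℝ) 1) (s : ℝ) (hs : 0 ≤ s) :
    -(s * Real.Gamma (α * (s - 1) + 1) / Real.Gamma (α * s + 1)) =
      -∫ y in Set.Ioi (0:ℝ),
        (1 - Real.exp (-s * y)) *
          ((1 - α) * Real.exp (y / α) /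
            (α * Real.Gamma (α + 1) * (Real.exp (y / α) - 1) ^ (2 - α))) := by
  obtain ⟨hα0, hα1⟩ := hα
  have hsubst : ∀ y ∈ Ioi (0 : ℝ), (1 - exp (-s * y)) *
      ((1 - α) * exp (y / α) / (α * Gamma (α + 1) * (exp (y / α) - 1) ^ (2 - α))) =
      (exp (-y / α) / α) • ((1 - α) / Gamma (α + 1) *
        ((1 - exp (-y / α) ^ (α * s)) * exp (-y / α) ^ (-α) * (1 - exp (-y / α)) ^ (α - 2))) := by
    intro y hy
    have hx1 : exp (-y / α) < 1 :=
      exp_lt_one_iff.2 (div_neg_of_neg_of_pos (neg_neg_of_pos hy) hα0)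
    have hinv : exp (y / α) = (exp (-y / α))⁻¹ := by rw [← exp_neg, neg_div, neg_neg]
    have hpow : exp (-s * y) = exp (-y / α) ^ (α * s) := by
      rw [← exp_mul]; congr 1; field_simp
    rw [hinv, hpow, smul_eq_mul, mul_div_mul_comm,
      inv_div_inv_sub_one_rpow (exp_pos _) hx1]
    ring
  rw [setIntegral_congr_fun measurableSet_Ioi hsubst,
    integral_Ioi_smul_comp_exp_neg_div hα0 (fun x ↦ (1 - α) / Gamma (α + 1) *
      ((1 - x ^ (α * s)) * x ^ (-α) * (1 - x) ^ (α - 2))),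
    integral_const_mul, integral_one_sub_rpow_mul_rpow_mul_one_sub_rpow hα0 hα1 (by positivity),
    beta, Gamma_add_one hα0.ne', show α * (s - 1) + 1 = α * s + 1 - α by ring,
    show α * s + 1 - α + α = α * s + 1 by ring]
  have hΓα := Gamma_pos_of_pos hα0
  have hΓαs := Gamma_pos_of_pos (by positivity : 0 < α * s + 1)
  have h1α := sub_pos.2 hα1
  field_simp
end

section
/- For α ∈ (0,1), the function π_α(y) = (1-α)e^{y/α} / (α Γ(α+1)(e^{y/α}-1)^{2-α}) is positive and non-increasing on (0,∞), and satisfies ∫₀^∞ min(1,y) π_α(y) dy < ∞. -/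
/-!
Write `π_α(y) = c · e^{y/α} / (e^{y/α} - 1)^{2-α}` with `c = (1 - α) / (α Γ(α + 1)) > 0`.
Substituting `t = e^{y/α}`, monotonicity reduces to `t ↦ t / (t - 1)^p` being non-increasing on
`(1, ∞)` for `p ≥ 1`. Near `0`, `e^{y/α} - 1 ≥ y/α` gives `y π_α(y) = O(y^{α-1})`, integrable since
`α - 1 > -1`; at infinity `π_α` has the explicit antiderivative `-(e^{y/α} - 1)^{α-1} / Γ(α + 1)`,
which tends to `0` because `α < 1`.
-/

open Real Set MeasureTheory Filter

theorem antitoneOn_div_rpow_sub_one {p : ℝ} (hp : 1 ≤ p) :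
    AntitoneOn (fun t : ℝ => t / (t - 1) ^ p) (Ioi 1) := by
  intro s (hs : 1 < s) t (ht : 1 < t) hst
  have hs1 : 0 < s - 1 := by linarith
  have ht1 : 0 < t - 1 := by linarith
  rw [div_le_div_iff₀ (rpow_pos_of_pos ht1 p) (rpow_pos_of_pos hs1 p)]
  -- `(u - 1) ^ p = (u - 1) * (u - 1) ^ (p - 1)` splits the claim into `t (s - 1) ≤ s (t - 1)`
  -- and the monotonicity of `u ↦ u ^ (p - 1)`.
  have hsplit : ∀ u : ℝ, 0 < u → u ^ p = u * u ^ (p - 1) := fun u hu => by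
    rw [mul_comm, ← rpow_add_one hu.ne', sub_add_cancel]
  rw [hsplit _ hs1, hsplit _ ht1]
  calc t * ((s - 1) * (s - 1) ^ (p - 1)) = (t * (s - 1)) * (s - 1) ^ (p - 1) := by ring
    _ ≤ (s * (t - 1)) * (t - 1) ^ (p - 1) := by
        gcongr ?_ * ?_
        · nlinarith
        · exact rpow_le_rpow hs1.le (by linarith) (by linarith)
    _ = s * ((t - 1) * (t - 1) ^ (p - 1)) := by ring

theorem one_lt_exp_div {a y : ℝ} (ha : 0 < a) (hy : 0 < y) : 1 < exp (y / a) :=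
  one_lt_exp_iff.2 (div_pos hy ha)

theorem exp_div_div_rpow_exp_sub_one_pos {a y : ℝ} (p : ℝ) (ha : 0 < a) (hy : 0 < y) :
    0 < exp (y / a) / (exp (y / a) - 1) ^ p :=
  div_pos (exp_pos _) (rpow_pos_of_pos (sub_pos.2 (one_lt_exp_div ha hy)) p)

theorem antitoneOn_exp_div_div_rpow_exp_sub_one {a p : ℝ} (ha : 0 < a) (hp : 1 ≤ p) :
    AntitoneOn (fun y : ℝ => exp (y / a) / (exp (y / a) - 1) ^ p) (Ioi 0) :=
  fun _ hx _ hy hxy => antitoneOn_div_rpow_sub_one hp (one_lt_exp_div ha hx)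
    (one_lt_exp_div ha hy) (exp_le_exp.2 (div_le_div_of_nonneg_right hxy ha.le))

theorem integrableOn_Ioc_mul_exp_div_div_rpow_exp_sub_one {a p : ℝ} (ha : 0 < a) (hp₀ : 0 ≤ p)
    (hp₂ : p < 2) :
    IntegrableOn (fun y : ℝ => y * (exp (y / a) / (exp (y / a) - 1) ^ p)) (Ioc 0 1) := by
  have hdom : IntegrableOn (fun y : ℝ => exp (1 / a) * a ^ p * y ^ (1 - p)) (Ioc 0 1) :=
    ((intervalIntegrable_iff_integrableOn_Ioc_of_le zero_le_one).1
      (intervalIntegral.intervalIntegrable_rpow' (by linarith))).const_mul _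
  refine hdom.mono' (by fun_prop : Measurable _).aestronglyMeasurable.restrict
    ((ae_restrict_iff' measurableSet_Ioc).2 (ae_of_all _ fun y ⟨hy₀, hy₁⟩ => ?_))
  have hya : 0 < y / a := div_pos hy₀ ha
  rw [norm_of_nonneg (mul_nonneg hy₀.le (exp_div_div_rpow_exp_sub_one_pos p ha hy₀).le)]
  calc y * (exp (y / a) / (exp (y / a) - 1) ^ p)
      ≤ y * (exp (1 / a) / (y / a) ^ p) := by
        gcongr
        · linarith [add_one_le_exp (y / a)]
    _ = exp (1 / a) * a ^ p * y ^ (1 - p) := by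
        rw [div_rpow hy₀.le ha.le, rpow_sub hy₀, rpow_one]
        field_simp

theorem integrableOn_Ioi_exp_div_div_rpow_exp_sub_one {a p b : ℝ} (ha : 0 < a) (hp : 1 < p)
    (hb : 0 < b) :
    IntegrableOn (fun y : ℝ => exp (y / a) / (exp (y / a) - 1) ^ p) (Ioi b) := by
  set g : ℝ → ℝ := fun y => a / (1 - p) * (exp (y / a) - 1) ^ (1 - p)
  have hg : Tendsto g atTop (nhds 0) := by
    have hexp : Tendsto (fun y : ℝ => exp (y / a) - 1) atTop atTop :=
      tendsto_atTop_add_const_right _ _ (tendsto_exp_atTop.comp (tendsto_id.atTop_div_const ha))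
    simpa using ((tendsto_rpow_neg_atTop (by linarith : 0 < p - 1)).comp hexp).const_mul
      (a / (1 - p))
  refine integrableOn_Ioi_deriv_of_nonneg' (g := g) (fun x hx => ?_)
    (fun x hx => (exp_div_div_rpow_exp_sub_one_pos p ha (hb.trans hx)).le) hg
  have hx₁ : 0 < exp (x / a) - 1 := sub_pos.2 (one_lt_exp_div ha (hb.trans_le hx))
  have hderiv := ((((hasDerivAt_id x).div_const a).exp.sub_const 1).rpow_const
    (p := 1 - p) (Or.inl hx₁.ne')).const_mul (a / (1 - p))
  refine hderiv.congr_deriv ?_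
  simp only [id, show 1 - p - 1 = -p by ring, rpow_neg hx₁.le]
  have hp₁ : 1 - p ≠ 0 := by linarith
  field_simp

theorem integrableOn_Ioi_min_one_mul {f : ℝ → ℝ} (h₀ : IntegrableOn (fun y => y * f y) (Ioc 0 1))
    (h₁ : IntegrableOn f (Ioi 1)) : IntegrableOn (fun y => min 1 y * f y) (Ioi 0) := by
  rw [← Ioc_union_Ioi_eq_Ioi zero_le_one]
  refine (h₀.congr_fun (fun y hy => ?_) measurableSet_Ioc).union
    (h₁.congr_fun (fun y hy => ?_) measurableSet_Ioi)
  · rw [min_eq_right hy.2]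
  · rw [min_eq_left (le_of_lt hy), one_mul]

theorem stmt_1 (α : ℝ) (hα : α ∈ Set.Ioo (0:ℝ) 1) :
    (∀ y : ℝ, 0 < y →
      0 < (1 - α) * Real.exp (y / α) /
            (α * Real.Gamma (α + 1) * (Real.exp (y / α) - 1) ^ (2 - α))) ∧
    AntitoneOn (fun y : ℝ =>
      (1 - α) * Real.exp (y / α) /
        (α * Real.Gamma (α + 1) * (Real.exp (y / α) - 1) ^ (2 - α))) (Set.Ioi 0) ∧
    MeasureTheory.IntegrableOn (fun y : ℝ =>
      min 1 y * ((1 - α) * Real.exp (y / α) /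
        (α * Real.Gamma (α + 1) * (Real.exp (y / α) - 1) ^ (2 - α)))) (Set.Ioi 0) := by
  obtain ⟨hα₀, hα₁⟩ := hα
  set c := (1 - α) / (α * Gamma (α + 1))
  have hc : 0 < c := div_pos (by linarith) (mul_pos hα₀ (Gamma_pos_of_pos (by linarith)))
  have hsplit : ∀ y, (1 - α) * exp (y / α) / (α * Gamma (α + 1) * (exp (y / α) - 1) ^ (2 - α)) =
      c * (exp (y / α) / (exp (y / α) - 1) ^ (2 - α)) := fun y => mul_div_mul_comm _ _ _ _
  simp only [hsplit]
  refine ⟨fun y hy => mul_pos hc (exp_div_div_rpow_exp_sub_one_pos _ hα₀ hy),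
    (monotone_mul_left_of_nonneg hc.le).comp_antitoneOn
      (antitoneOn_exp_div_div_rpow_exp_sub_one hα₀ (by linarith)),
    integrableOn_Ioi_min_one_mul ?_ ?_⟩
  · exact IntegrableOn.congr_fun ((integrableOn_Ioc_mul_exp_div_div_rpow_exp_sub_one (p := 2 - α)
      hα₀ (by linarith) (by linarith)).const_mul c) (fun y _ => mul_left_comm c y _)
      measurableSet_Ioc
  · exact (integrableOn_Ioi_exp_div_div_rpow_exp_sub_one hα₀ (by linarith) one_pos).const_mul c
end
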